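/- arXiv:1707.02503 — 2 statements merged into one kernel-verified Lean document; each statement's English description precedes it below -/
import Mathlib

section
/- Let T ≥ 1 and N ≥ 1 be integers, b ∈ ℝ^T, and for each n ∈ {1,…,N} let C_n ⊆ ℝ^T be a nonempty convex set such that all elements of C_n have the same coordinate sum. Let (p_n^k)_{k≥0} be sequences with p_n^0 ∈ C_n, d^k = (1/N)·(b + Σ_{n=1}^N p_n^k), and p_n^{k+1} ∈ C_n a minimizer of ‖p − p_n^k + d^k‖² over p ∈ C_n for every k ≥ 0 and every n. Then for every K ≥ 1, Σ_{k=0}^{K−1} Σ_{n=1}^N ‖p_n^{k+1} − p_n^k‖² ≤ T·N·V(d^0); in particular the series Σ_{k=0}^∞ Σ_{n=1}^N ‖p_n^{k+1} − p_n^k‖² converges and the update steps p_n^{k+1} − p_n^k tend to 0 as k → ∞. -/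
open scoped RealInnerProductSpace

/-- The (time) variance of a traffic profile `d ∈ ℝ^T`. -/
noncomputable def V {T : ℕ} (d : EuclideanSpace ℝ (Fin T)) : ℝ :=
  (1 / (T : ℝ)) * ∑ t, (d t - (1 / (T : ℝ)) * ∑ s, d s) ^ 2

/-
Each `p n (k + 1)` is the metric projection of `p n k - d k` onto the convex set `C n`, so the
step `Δₙ = p n (k + 1) - p n k` satisfies the variational inequality `⟪Δₙ, d k⟫ ≤ -‖Δₙ‖²`.
Steps have coordinate sum zero, hence `d (k + 1) = d k + S / N` with `S = ∑ₙ Δₙ` keeps the mean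
of the profile, and `T V (d + S / N) = T V d + (2 / N) ⟪d, S⟫ + ‖S‖² / N²`. Together with
`‖S‖² ≤ N ∑ₙ ‖Δₙ‖²` this gives `∑ₙ ‖Δₙ‖² ≤ T N (V (d k) - V (d (k + 1)))`, which telescopes
because `V ≥ 0`.
-/

open Finset Filter Topology

theorem inner_sub_le_neg_norm_sq_of_forall_norm_le {E : Type*} [NormedAddCommGroup E]
    [InnerProductSpace ℝ E] {C : Set E} (hC : Convex ℝ C) {a x g : E} (ha : a ∈ C) (hx : x ∈ C)
    (hmin : ∀ q ∈ C, ‖x - a + g‖ ≤ ‖q - a + g‖) : ⟪x - a, g⟫ ≤ -‖x - a‖ ^ 2 := by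
  have hdist : ∀ q, ‖(a - g) - q‖ = ‖q - a + g‖ := fun q => by
    rw [← norm_neg]; congr 1; abel
  have hproj : ‖(a - g) - x‖ = ⨅ q : C, ‖(a - g) - q‖ := by
    refine (IsMinOn.iInf_eq (f := fun q => ‖(a - g) - q‖) hx fun q hq => ?_).symm
    change ‖(a - g) - x‖ ≤ ‖(a - g) - q‖
    rw [hdist, hdist]
    exact hmin q hq
  have := (norm_eq_iInf_iff_real_inner_le_zero hC hx).mp hproj a ha
  have hsplit : (a - g) - x = -(x - a) - g := by abel
  rw [hsplit, ← neg_sub x a, inner_neg_right, inner_sub_left, inner_neg_left,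
    real_inner_self_eq_norm_sq, real_inner_comm] at this
  linarith

theorem V_nonneg {T : ℕ} (d : EuclideanSpace ℝ (Fin T)) : 0 ≤ V d := by
  unfold V; positivity

theorem mul_V_add_of_sum_eq_zero {T : ℕ} (d S : EuclideanSpace ℝ (Fin T))
    (hS : ∑ t, S t = 0) : (T : ℝ) * V (d + S) = T * V d + 2 * ⟪d, S⟫ + ‖S‖ ^ 2 := by
  rcases T.eq_zero_or_pos with rfl | hT
  · simp [V, PiLp.inner_apply, EuclideanSpace.real_norm_sq_eq]
  set m := (1 / (T : ℝ)) * ∑ s, d s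
  have hcross : ∑ t, (d t - m) * S t = ⟪d, S⟫ := by
    simp [sub_mul, sum_sub_distrib, ← mul_sum, hS, PiLp.inner_apply, mul_comm]
  have hV : V (d + S) = (1 / T) * ∑ t, (d t + S t - m) ^ 2 := by
    simp [V, sum_add_distrib, hS, m]
  rw [hV, V, ← mul_assoc, ← mul_assoc, mul_one_div_cancel (by positivity), one_mul, one_mul,
    EuclideanSpace.real_norm_sq_eq, ← hcross, mul_sum, ← sum_add_distrib, ← sum_add_distrib]
  exact sum_congr rfl fun t _ => by ring

theorem sum_norm_sq_le_mul_V_sub {T N : ℕ} (d : EuclideanSpace ℝ (Fin T))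
    (Δ : Fin N → EuclideanSpace ℝ (Fin T)) (hsum : ∀ n, ∑ t, Δ n t = 0)
    (hinner : ∀ n, ⟪Δ n, d⟫ ≤ -‖Δ n‖ ^ 2) :
    ∑ n, ‖Δ n‖ ^ 2 ≤ T * N * (V d - V (d + (N : ℝ)⁻¹ • ∑ n, Δ n)) := by
  rcases N.eq_zero_or_pos with rfl | hN
  · simp
  set S := ∑ n, Δ n
  set A := ∑ n, ‖Δ n‖ ^ 2
  have hS : ∑ t, ((N : ℝ)⁻¹ • S) t = 0 := by
    simp only [PiLp.smul_apply, smul_eq_mul, ← mul_sum, S, WithLp.ofLp_sum, Finset.sum_apply]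
    rw [sum_comm]; simp [hsum]
  have hinnerS : ⟪d, S⟫ ≤ -A := by
    rw [inner_sum, ← sum_neg_distrib]
    exact sum_le_sum fun n _ => (real_inner_comm _ _).trans_le (hinner n)
  have hnormS : (N : ℝ)⁻¹ * ‖S‖ ^ 2 ≤ A := by
    rw [inv_mul_le_iff₀ (by positivity)]
    calc ‖S‖ ^ 2 ≤ (∑ n, ‖Δ n‖) ^ 2 := by gcongr; exact norm_sum_le _ _
      _ ≤ N * A := by simpa using sq_sum_le_card_mul_sum_sq (s := univ) (f := fun n => ‖Δ n‖)
  have hexpand := mul_V_add_of_sum_eq_zero d _ hS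
  rw [real_inner_smul_right, norm_smul, Real.norm_of_nonneg (by positivity)] at hexpand
  have hdecrease : (T : ℝ) * N * (V d - V (d + (N : ℝ)⁻¹ • S))
      = -2 * ⟪d, S⟫ - (N : ℝ)⁻¹ * ‖S‖ ^ 2 := by
    rw [show (T : ℝ) * N * (V d - V (d + (N : ℝ)⁻¹ • S))
      = N * (T * V d - T * V (d + (N : ℝ)⁻¹ • S)) by ring, hexpand]
    field_simp
    ring
  linarith

theorem sum_range_le_of_le_sub_succ {u f : ℕ → ℝ} (hf : ∀ k, 0 ≤ f k)
    (hu : ∀ k, u k ≤ f k - f (k + 1)) (K : ℕ) : ∑ k ∈ range K, u k ≤ f 0 :=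
  (sum_le_sum fun k _ => hu k).trans <| by rw [sum_range_sub']; linarith [hf K]

theorem tendsto_zero_of_tendsto_sum_norm_sq {ι α E : Type*} [Fintype ι]
    [SeminormedAddCommGroup E] {l : Filter α} {x : ι → α → E} (h : Tendsto (fun k => ∑ i, ‖x i k‖ ^ 2) l (𝓝 0)) (i : ι) :
    Tendsto (x i) l (𝓝 0) := by
  have hsq : Tendsto (fun k => ‖x i k‖ ^ 2) l (𝓝 0) :=
    squeeze_zero (fun _ => by positivity)
      (fun k => single_le_sum (f := fun j => ‖x j k‖ ^ 2) (fun _ _ => by positivity) (mem_univ i)) h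
  simpa [tendsto_zero_iff_norm_tendsto_zero, Real.sqrt_sq (norm_nonneg _)] using hsq.sqrt

theorem summable_update_steps_general (T N : ℕ)
    (b : EuclideanSpace ℝ (Fin T))
    (C : Fin N → Set (EuclideanSpace ℝ (Fin T)))
    (hconv : ∀ n, Convex ℝ (C n))
    (hsum : ∀ n, ∃ P : ℝ, ∀ p ∈ C n, ∑ t, p t = P)
    (p : Fin N → ℕ → EuclideanSpace ℝ (Fin T))
    (hp0 : ∀ n, p n 0 ∈ C n)
    (d : ℕ → EuclideanSpace ℝ (Fin T))
    (hd : ∀ k, d k = (1 / (N : ℝ)) • (b + ∑ n, p n k))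
    (hmem : ∀ n k, p n (k + 1) ∈ C n)
    (hmin : ∀ n k, ∀ q ∈ C n, ‖p n (k + 1) - p n k + d k‖ ≤ ‖q - p n k + d k‖) :
    (∀ K, 1 ≤ K →
        ∑ k ∈ Finset.range K, ∑ n, ‖p n (k + 1) - p n k‖ ^ 2 ≤ (T : ℝ) * (N : ℝ) * V (d 0))
      ∧ Summable (fun k => ∑ n, ‖p n (k + 1) - p n k‖ ^ 2)
      ∧ ∀ n, Filter.Tendsto (fun k => p n (k + 1) - p n k) Filter.atTop (nhds 0) := by
  have hmemC : ∀ n k, p n k ∈ C n := fun n k => k.casesOn (hp0 n) (hmem n)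
  have hstep_sum : ∀ n k, ∑ t, (p n (k + 1) - p n k) t = 0 := by
    intro n k
    obtain ⟨P, hP⟩ := hsum n
    simp [sum_sub_distrib, hP _ (hmemC n _)]
  have hd_succ : ∀ k, d (k + 1) = d k + (N : ℝ)⁻¹ • ∑ n, (p n (k + 1) - p n k) := by
    intro k
    rw [hd, hd, sum_sub_distrib, one_div, smul_add, smul_add, smul_sub]
    abel
  have hdescent : ∀ k, ∑ n, ‖p n (k + 1) - p n k‖ ^ 2
      ≤ T * N * V (d k) - T * N * V (d (k + 1)) := fun k => by
    rw [← mul_sub, hd_succ]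
    exact sum_norm_sq_le_mul_V_sub _ _ (hstep_sum · k) fun n =>
      inner_sub_le_neg_norm_sq_of_forall_norm_le (hconv n) (hmemC n k) (hmem n k) (hmin n k)
  have hbound := sum_range_le_of_le_sub_succ (fun k => by have := V_nonneg (d k); positivity)
    hdescent
  have hsummable := summable_of_sum_range_le (fun k => by positivity) hbound
  exact ⟨fun K _ => hbound K, hsummable,
    tendsto_zero_of_tendsto_sum_norm_sq hsummable.tendsto_atTop_zero⟩

theorem summable_update_steps (T N : ℕ) (hT : 1 ≤ T) (hN : 1 ≤ N)
    (b : EuclideanSpace ℝ (Fin T))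
    (C : Fin N → Set (EuclideanSpace ℝ (Fin T)))
    (hconv : ∀ n, Convex ℝ (C n)) (hne : ∀ n, (C n).Nonempty)
    (hsum : ∀ n, ∃ P : ℝ, ∀ p ∈ C n, ∑ t, p t = P)
    (p : Fin N → ℕ → EuclideanSpace ℝ (Fin T))
    (hp0 : ∀ n, p n 0 ∈ C n)
    (d : ℕ → EuclideanSpace ℝ (Fin T))
    (hd : ∀ k, d k = (1 / (N : ℝ)) • (b + ∑ n, p n k))
    (hmem : ∀ n k, p n (k + 1) ∈ C n)
    (hmin : ∀ n k, ∀ q ∈ C n, ‖p n (k + 1) - p n k + d k‖ ≤ ‖q - p n k + d k‖) :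
    (∀ K, 1 ≤ K →
        ∑ k ∈ Finset.range K, ∑ n, ‖p n (k + 1) - p n k‖ ^ 2 ≤ (T : ℝ) * (N : ℝ) * V (d 0))
      ∧ Summable (fun k => ∑ n, ‖p n (k + 1) - p n k‖ ^ 2)
      ∧ ∀ n, Filter.Tendsto (fun k => p n (k + 1) - p n k) Filter.atTop (nhds 0) :=
  summable_update_steps_general T N b C hconv hsum p hp0 d hd hmem hmin
end

section
/- Let T ≥ 1 and let N′, N″ be disjoint finite index sets with N := |N′| + |N″| ≥ 2. Let b ∈ ℝ^T, let p_n ∈ ℝ^T for each n ∈ N′ ∪ N″, and set d = (1/N)·(b + Σ_n p_n). Suppose: (i) for each n ∈ N′ there is a vector p_n⁺ ∈ ℝ^T with Σ_t p_n⁺(t) = Σ_t p_n(t) and ⟨d, p_n⁺ − p_n⟩ ≤ −‖p_n⁺ − p_n‖²; (ii) for each n ∈ N″ there is an integrable random vector X_n in ℝ^T such that the family (X_n)_{n∈N″} is independent, ‖X_n‖ = ‖p_n‖ almost surely, Σ_t X_n(t) = Σ_t p_n(t) almost surely, and the mean q_n = E X_n satisfies ⟨N·d, q_n − p_n⟩ ≤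 −(N−1)·‖q_n − p_n‖² + ⟨p_n, q_n − p_n⟩. Define the random profile d⁺ = (1/N)·(b + Σ_{n∈N′} p_n⁺ + Σ_{n∈N″} X_n). Then T·N²·(E[V(d⁺)] − V(d)) ≤ −N·Σ_{n∈N′} ‖p_n⁺ − p_n‖² − (N−1)·Σ_{n∈N″} ‖q_n − p_n‖² ≤ 0; in particular E[V(d⁺)] ≤ V(d). -/
open MeasureTheory ProbabilityTheory
open scoped RealInnerProductSpace

/-
Scaled by `N`, the update reads `N • d⁺ = N • d + u + ∑ₙ (Xₙ - pₙ)` with `u = ∑ₙ (pₙ⁺ - pₙ)`.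
Every update preserves the total traffic `∑ₜ`, so `T N² (V d⁺ - V d) = ‖N • d⁺‖² - ‖N • d‖²`.
For a constant `c` and independent `Yₙ`,
`E ‖c + ∑ₙ Yₙ‖² = ‖c + ∑ₙ E Yₙ‖² + ∑ₙ (E ‖Yₙ‖² - ‖E Yₙ‖²)`, and since `‖Xₙ‖ = ‖pₙ‖` the variance term of `Yₙ = Xₙ - pₙ` is `2 ⟪pₙ, pₙ - qₙ⟫ - ‖qₙ - pₙ‖²`.
The descent hypotheses bound the cross terms with `N • d`, and Cauchy–Schwarz over the `N`
applications bounds the squared norm of the total mean step by `N` times the sum of squared steps.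
-/

section Variance

variable {T : ℕ}

lemma mul_V_eq (x : EuclideanSpace ℝ (Fin T)) :
    (T : ℝ) * V x = ‖x‖ ^ 2 - (∑ t, x t) ^ 2 / T := by
  rcases Nat.eq_zero_or_pos T with rfl | hT
  · simp [Subsingleton.elim x 0]
  have hT' : (T : ℝ) ≠ 0 := by positivity
  simp only [V, EuclideanSpace.norm_sq_eq, Real.norm_eq_abs, sq_abs, sub_sq, Finset.sum_add_distrib,
    Finset.sum_sub_distrib, ← Finset.sum_mul, ← Finset.mul_sum, Finset.sum_const, Finset.card_univ,
    Fintype.card_fin, nsmul_eq_mul]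
  field_simp
  ring

lemma V_smul (c : ℝ) (x : EuclideanSpace ℝ (Fin T)) : V (c • x) = c ^ 2 * V x := by
  have h (t : Fin T) :
      (c * x t - 1 / T * ∑ s, c * x s) ^ 2 = c ^ 2 * (x t - 1 / T * ∑ s, x s) ^ 2 := by
    rw [← Finset.mul_sum]; ring
  simp only [V, PiLp.smul_apply, smul_eq_mul]
  rw [Finset.sum_congr rfl fun t _ => h t, ← Finset.mul_sum]
  ring

lemma mul_V_add_sub_V (x v : EuclideanSpace ℝ (Fin T)) (hv : ∑ t, v t = 0) :
    (T : ℝ) * (V (x + v) - V x) = ‖x + v‖ ^ 2 - ‖x‖ ^ 2 := by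
  have hsum : ∑ t, (x + v) t = ∑ t, x t := by
    simp [Finset.sum_add_distrib, hv]
  rw [mul_sub, mul_V_eq, mul_V_eq, hsum]
  ring

lemma sum_coord_sum_sub_eq_zero {ι : Type*} [Fintype ι] (a b : ι → EuclideanSpace ℝ (Fin T))
    (h : ∀ n, ∑ t, a n t = ∑ t, b n t) : ∑ t, (∑ n, (a n - b n)) t = 0 := by
  simp [Finset.sum_apply, Finset.sum_comm (γ := Fin T), h]

end Variance

lemma norm_sum_sq_le_card_mul {ι E : Type*} [Fintype ι] [SeminormedAddCommGroup E] (v : ι → E) :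
    ‖∑ i, v i‖ ^ 2 ≤ Fintype.card ι * ∑ i, ‖v i‖ ^ 2 :=
  calc ‖∑ i, v i‖ ^ 2 ≤ (∑ i, ‖v i‖) ^ 2 := by gcongr; exact norm_sum_le _ _
    _ ≤ Fintype.card ι * ∑ i, ‖v i‖ ^ 2 := sq_sum_le_card_mul_sum_sq

lemma norm_sum_add_sum_sq_le {E ι₁ ι₂ : Type*} [SeminormedAddCommGroup E] [Fintype ι₁] [Fintype ι₂]
    (a : ι₁ → E) (b : ι₂ → E) :
    ‖∑ i, a i + ∑ j, b j‖ ^ 2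
      ≤ (Fintype.card ι₁ + Fintype.card ι₂) * (∑ i, ‖a i‖ ^ 2 + ∑ j, ‖b j‖ ^ 2) := by
  simpa [Fintype.sum_sum_type] using norm_sum_sq_le_card_mul (Sum.elim a b)

lemma memLp_two_sub_const_of_norm_eq {Ω F : Type*} [MeasurableSpace Ω] {μ : Measure Ω}
    [IsFiniteMeasure μ] [NormedAddCommGroup F] {X : Ω → F} {p : F}
    (hX : AEStronglyMeasurable X μ) (hnorm : ∀ᵐ ω ∂μ, ‖X ω‖ = ‖p‖) :
    MemLp (fun ω => X ω - p) 2 μ :=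
  MemLp.of_bound (hX.sub aestronglyMeasurable_const) (2 * ‖p‖) <| by
    filter_upwards [hnorm] with ω hω
    linarith [norm_sub_le (X ω) p]

section RandomVectors

variable {Ω E ι : Type*} [MeasurableSpace Ω] {μ : Measure Ω}
  [NormedAddCommGroup E] [InnerProductSpace ℝ E] [CompleteSpace E]

lemma integral_norm_const_add_sq [IsProbabilityMeasure μ] (c : E) {Z : Ω → E}
    (hZ : MemLp Z 2 μ) :
    ∫ ω, ‖c + Z ω‖ ^ 2 ∂μ
      = ‖c + ∫ ω, Z ω ∂μ‖ ^ 2 + ((∫ ω, ‖Z ω‖ ^ 2 ∂μ) - ‖∫ ω, Z ω ∂μ‖ ^ 2) := by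
  have hZ₁ : Integrable Z μ := hZ.integrable one_le_two
  simp only [norm_add_sq_real]
  rw [integral_add ((integrable_const _).fun_add ((hZ₁.const_inner c).const_mul 2))
      (hZ.integrable_norm_pow two_ne_zero),
    integral_add (integrable_const _) ((hZ₁.const_inner c).const_mul 2), integral_const_mul,
    integral_inner hZ₁, integral_const, probReal_univ, one_smul]
  ring

lemma integral_norm_sum_sq_of_pairwise_indepFun [IsFiniteMeasure μ] [MeasurableSpace E]
    [BorelSpace E] [Fintype ι] {Y : ι → Ω → E}
    (hindep : Pairwise fun i j => Y i ⟂ᵢ[μ] Y j) (hY : ∀ i, MemLp (Y i) 2 μ) :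
    ∫ ω, ‖∑ i, Y i ω‖ ^ 2 ∂μ
      = ‖∑ i, ∫ ω, Y i ω ∂μ‖ ^ 2 + ∑ i, ((∫ ω, ‖Y i ω‖ ^ 2 ∂μ) - ‖∫ ω, Y i ω ∂μ‖ ^ 2) := by
  classical
  have hY₁ (i : ι) : Integrable (Y i) μ := (hY i).integrable one_le_two
  have hint (i j : ι) : Integrable (fun ω => ⟪Y i ω, Y j ω⟫) μ := by
    rcases eq_or_ne i j with rfl | hij
    · simpa only [real_inner_self_eq_norm_sq] using (hY i).integrable_norm_pow two_ne_zero
    · exact (hindep hij).integrable_bilin (hY₁ i) (hY₁ j) (innerSL ℝ)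
  have hval (i j : ι) : ∫ ω, ⟪Y i ω, Y j ω⟫ ∂μ = ⟪∫ ω, Y i ω ∂μ, ∫ ω, Y j ω ∂μ⟫
      + if i = j then (∫ ω, ‖Y i ω‖ ^ 2 ∂μ) - ‖∫ ω, Y i ω ∂μ‖ ^ 2 else 0 := by
    rcases eq_or_ne i j with rfl | hij
    · simp only [real_inner_self_eq_norm_sq, if_true]
      ring
    · rw [if_neg hij, add_zero]
      exact (hindep hij).integral_bilin (hY₁ i) (hY₁ j) (innerSL ℝ)
  have hexpand (f : ι → E) : ‖∑ i, f i‖ ^ 2 = ∑ i, ∑ j, ⟪f i, f j⟫ := by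
    rw [← real_inner_self_eq_norm_sq, sum_inner]
    simp only [inner_sum]
  rw [hexpand, integral_congr_ae (ae_of_all _ fun ω => hexpand fun i => Y i ω),
    integral_finsetSum _ fun i _ => integrable_finsetSum _ fun j _ => hint i j]
  simp only [integral_finsetSum _ fun j _ => hint _ j, hval, Finset.sum_add_distrib,
    Finset.sum_ite_eq, Finset.mem_univ, if_true]

lemma integral_norm_sub_sq_of_norm_eq [IsProbabilityMeasure μ] {X : Ω → E} {p : E}
    (hX : Integrable X μ) (hnorm : ∀ᵐ ω ∂μ, ‖X ω‖ = ‖p‖) :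
    ∫ ω, ‖X ω - p‖ ^ 2 ∂μ = 2 * ⟪p, p - ∫ ω, X ω ∂μ⟫ := by
  have h : ∀ᵐ ω ∂μ, ‖X ω - p‖ ^ 2 = 2 * ‖p‖ ^ 2 - 2 * ⟪p, X ω⟫ := by
    filter_upwards [hnorm] with ω hω
    rw [norm_sub_sq_real, hω, real_inner_comm]
    ring
  rw [integral_congr_ae h, integral_sub (integrable_const _) ((hX.const_inner p).const_mul 2),
    integral_const, probReal_univ, one_smul, integral_const_mul, integral_inner hX, inner_sub_right,
    real_inner_self_eq_norm_sq]
  ring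

lemma integral_norm_const_add_sum_sub_sq_of_norm_eq [IsProbabilityMeasure μ]
    [MeasurableSpace E] [BorelSpace E] [Fintype ι] {X : ι → Ω → E} {p : ι → E} (c : E)
    (hindep : iIndepFun X μ) (hX : ∀ i, Integrable (X i) μ)
    (hnorm : ∀ i, ∀ᵐ ω ∂μ, ‖X i ω‖ = ‖p i‖) :
    ∫ ω, ‖c + ∑ i, (X i ω - p i)‖ ^ 2 ∂μ
      = ‖c + ∑ i, ((∫ ω, X i ω ∂μ) - p i)‖ ^ 2
        + ∑ i, (2 * ⟪p i, p i - ∫ ω, X i ω ∂μ⟫ - ‖(∫ ω, X i ω ∂μ) - p i‖ ^ 2) := by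
  classical
  have hmem (i : ι) := memLp_two_sub_const_of_norm_eq (hX i).1 (hnorm i)
  have hmean (i : ι) : ∫ ω, (X i ω - p i) ∂μ = (∫ ω, X i ω ∂μ) - p i := by
    rw [integral_sub (hX i) (integrable_const _), integral_const, probReal_univ, one_smul]
  have hindep' : Pairwise fun i j => (fun ω => X i ω - p i) ⟂ᵢ[μ] (fun ω => X j ω - p j) :=
    fun i j hij => (hindep.indepFun hij).comp (measurable_id.sub_const _)
      (measurable_id.sub_const _)
  rw [integral_norm_const_add_sq c (memLp_finsetSum _ fun i _ => hmem i),
    integral_finsetSum _ fun i _ => (hmem i).integrable one_le_two,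
    integral_norm_sum_sq_of_pairwise_indepFun hindep' hmem]
  simp only [hmean, integral_norm_sub_sq_of_norm_eq (hX _) (hnorm _)]
  ring

end RandomVectors

section Descent

variable {E ι₁ ι₂ : Type*} [NormedAddCommGroup E] [InnerProductSpace ℝ E] [Fintype ι₁] [Fintype ι₂]

lemma norm_sq_increment_le_of_descent {N : ℝ} (hN : N = Fintype.card ι₁ + Fintype.card ι₂)
    (d : E) {p₁ p₁' : ι₁ → E} {p₂ q : ι₂ → E}
    (h₁ : ∀ n, ⟪d, p₁' n - p₁ n⟫ ≤ -‖p₁' n - p₁ n‖ ^ 2)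
    (h₂ : ∀ n, ⟪N • d, q n - p₂ n⟫ ≤ -(N - 1) * ‖q n - p₂ n‖ ^ 2 + ⟪p₂ n, q n - p₂ n⟫) :
    ‖N • d + (∑ n, (p₁' n - p₁ n) + ∑ n, (q n - p₂ n))‖ ^ 2 - ‖N • d‖ ^ 2
        + ∑ n, (2 * ⟪p₂ n, p₂ n - q n⟫ - ‖q n - p₂ n‖ ^ 2)
      ≤ -N * ∑ n, ‖p₁' n - p₁ n‖ ^ 2 - (N - 1) * ∑ n, ‖q n - p₂ n‖ ^ 2 := by
  have hN₀ : 0 ≤ N := hN ▸ by positivity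
  have hu : ⟪N • d, ∑ n, (p₁' n - p₁ n)⟫ ≤ -N * ∑ n, ‖p₁' n - p₁ n‖ ^ 2 := by
    rw [real_inner_smul_left, inner_sum, neg_mul, ← mul_neg, ← Finset.sum_neg_distrib]
    gcongr with n
    exact h₁ n
  have hw : 2 * ⟪N • d, ∑ n, (q n - p₂ n)⟫ + ∑ n, (2 * ⟪p₂ n, p₂ n - q n⟫ - ‖q n - p₂ n‖ ^ 2)
      ≤ -(2 * N - 1) * ∑ n, ‖q n - p₂ n‖ ^ 2 := by
    rw [inner_sum, Finset.mul_sum, Finset.mul_sum, ← Finset.sum_add_distrib]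
    gcongr with n
    have := h₂ n
    rw [← neg_sub (q n), inner_neg_right]
    linarith
  have hcs := norm_sum_add_sum_sq_le (fun n => p₁' n - p₁ n) (fun n => q n - p₂ n)
  rw [← hN] at hcs
  rw [norm_add_sq_real, inner_add_right]
  linarith

end Descent

theorem one_step_expected_descent_general (T : ℕ) (hT : 1 ≤ T)
    {ι₁ ι₂ : Type*} [Fintype ι₁] [Fintype ι₂]
    (N : ℕ) (hNdef : N = Fintype.card ι₁ + Fintype.card ι₂) (hN : 2 ≤ N)
    {Ω : Type*} [MeasurableSpace Ω] (μ : Measure Ω) [IsProbabilityMeasure μ]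
    (b : EuclideanSpace ℝ (Fin T))
    (p₁ : ι₁ → EuclideanSpace ℝ (Fin T)) (p₂ : ι₂ → EuclideanSpace ℝ (Fin T))
    (d : EuclideanSpace ℝ (Fin T))
    (hd : d = (1 / (N : ℝ)) • (b + (∑ n, p₁ n + ∑ n, p₂ n)))
    -- (i) deterministic updates of the continuous-rate applications
    (pplus : ι₁ → EuclideanSpace ℝ (Fin T))
    (hsum₁ : ∀ n, ∑ t, pplus n t = ∑ t, p₁ n t)
    (hdesc₁ : ∀ n, ⟪d, pplus n - p₁ n⟫ ≤ -‖pplus n - p₁ n‖ ^ 2)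
    -- (ii) randomized updates of the discrete-rate applications
    (X : ι₂ → Ω → EuclideanSpace ℝ (Fin T))
    (hindep : iIndepFun X μ)
    (hint : ∀ n, Integrable (X n) μ)
    (hnorm : ∀ n, ∀ᵐ ω ∂μ, ‖X n ω‖ = ‖p₂ n‖)
    (hsum₂ : ∀ n, ∀ᵐ ω ∂μ, ∑ t, X n ω t = ∑ t, p₂ n t)
    (q : ι₂ → EuclideanSpace ℝ (Fin T)) (hq : ∀ n, q n = ∫ ω, X n ω ∂μ)
    (hdesc₂ : ∀ n, ⟪(N : ℝ) • d, q n - p₂ n⟫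
      ≤ -((N : ℝ) - 1) * ‖q n - p₂ n‖ ^ 2 + ⟪p₂ n, q n - p₂ n⟫)
    -- the updated random average profile
    (dplus : Ω → EuclideanSpace ℝ (Fin T))
    (hdplus : ∀ ω, dplus ω = (1 / (N : ℝ)) • (b + (∑ n, pplus n + ∑ n, X n ω))) :
    (T : ℝ) * (N : ℝ) ^ 2 * ((∫ ω, V (dplus ω) ∂μ) - V d)
        ≤ -(N : ℝ) * ∑ n, ‖pplus n - p₁ n‖ ^ 2 - ((N : ℝ) - 1) * ∑ n, ‖q n - p₂ n‖ ^ 2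
      ∧ -(N : ℝ) * ∑ n, ‖pplus n - p₁ n‖ ^ 2 - ((N : ℝ) - 1) * ∑ n, ‖q n - p₂ n‖ ^ 2 ≤ 0
      ∧ (∫ ω, V (dplus ω) ∂μ) ≤ V d := by
  have hN₀ : (0 : ℝ) < N := by positivity
  set c := (N : ℝ) • d + ∑ n, (pplus n - p₁ n)
  have hscaled (ω : Ω) : (N : ℝ) • dplus ω = c + ∑ n, (X n ω - p₂ n) := by
    simp only [c, hdplus, hd, smul_smul, mul_one_div_cancel hN₀.ne', one_smul,
      Finset.sum_sub_distrib]
    abel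
  have hstep : ∀ᵐ ω ∂μ, (T : ℝ) * N ^ 2 * V (dplus ω)
      = T * N ^ 2 * V d + (‖c + ∑ n, (X n ω - p₂ n)‖ ^ 2 - ‖(N : ℝ) • d‖ ^ 2) := by
    filter_upwards [ae_all_iff.2 hsum₂] with ω hω
    have h := mul_V_add_sub_V ((N : ℝ) • d) (∑ n, (pplus n - p₁ n) + ∑ n, (X n ω - p₂ n)) <| by
      simp only [PiLp.add_apply, Finset.sum_add_distrib, sum_coord_sum_sub_eq_zero _ _ hsum₁,
        sum_coord_sum_sub_eq_zero _ _ hω, add_zero]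
    rw [← add_assoc, ← hscaled, V_smul, V_smul] at h
    rw [← hscaled]
    linear_combination h
  have hsq_int : Integrable (fun ω => ‖c + ∑ n, (X n ω - p₂ n)‖ ^ 2) μ :=
    ((memLp_const c).add (memLp_finsetSum _ fun n _ =>
      memLp_two_sub_const_of_norm_eq (hint n).1 (hnorm n))).integrable_norm_pow two_ne_zero
  have hmean : (T : ℝ) * N ^ 2 * ((∫ ω, V (dplus ω) ∂μ) - V d)
      = ‖c + ∑ n, (q n - p₂ n)‖ ^ 2 - ‖(N : ℝ) • d‖ ^ 2
        + ∑ n, (2 * ⟪p₂ n, p₂ n - q n⟫ - ‖q n - p₂ n‖ ^ 2) := by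
    rw [mul_sub, ← integral_const_mul, integral_congr_ae hstep,
      integral_add (integrable_const _) (hsq_int.sub' (integrable_const _)),
      integral_sub hsq_int (integrable_const _),
      integral_norm_const_add_sum_sub_sq_of_norm_eq c hindep hint hnorm]
    simp only [integral_const, probReal_univ, one_smul, ← hq]
    ring
  have hdescent :=
    norm_sq_increment_le_of_descent (N := N) (by exact_mod_cast hNdef) d hdesc₁ hdesc₂
  rw [← add_assoc] at hdescent
  have hrhs : -(N : ℝ) * ∑ n, ‖pplus n - p₁ n‖ ^ 2 - ((N : ℝ) - 1) * ∑ n, ‖q n - p₂ n‖ ^ 2 ≤ 0 := by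
    have : (1 : ℝ) ≤ N := by exact_mod_cast one_le_two.trans hN
    nlinarith [Finset.sum_nonneg fun n (_ : n ∈ Finset.univ) => sq_nonneg ‖pplus n - p₁ n‖,
      Finset.sum_nonneg fun n (_ : n ∈ Finset.univ) => sq_nonneg ‖q n - p₂ n‖]
  have hfirst := hmean ▸ hdescent
  have hTN : (0 : ℝ) < T * N ^ 2 := by positivity
  exact ⟨hfirst, hrhs, by nlinarith⟩

theorem one_step_expected_descent (T : ℕ) (hT : 1 ≤ T)
    {ι₁ ι₂ : Type*} [Fintype ι₁] [Fintype ι₂]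
    (N : ℕ) (hNdef : N = Fintype.card ι₁ + Fintype.card ι₂) (hN : 2 ≤ N)
    {Ω : Type*} [MeasurableSpace Ω] (μ : Measure Ω) [IsProbabilityMeasure μ]
    (b : EuclideanSpace ℝ (Fin T))
    (p₁ : ι₁ → EuclideanSpace ℝ (Fin T)) (p₂ : ι₂ → EuclideanSpace ℝ (Fin T))
    (d : EuclideanSpace ℝ (Fin T))
    (hd : d = (1 / (N : ℝ)) • (b + (∑ n, p₁ n + ∑ n, p₂ n)))
    -- (i) deterministic updates of the continuous-rate applications
    (pplus : ι₁ → EuclideanSpace ℝ (Fin T))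
    (hsum₁ : ∀ n, ∑ t, pplus n t = ∑ t, p₁ n t)
    (hdesc₁ : ∀ n, ⟪d, pplus n - p₁ n⟫ ≤ -‖pplus n - p₁ n‖ ^ 2)
    -- (ii) randomized updates of the discrete-rate applications
    (X : ι₂ → Ω → EuclideanSpace ℝ (Fin T))
    (hmeas : ∀ n, Measurable (X n))
    (hindep : iIndepFun X μ)
    (hint : ∀ n, Integrable (X n) μ)
    (hnorm : ∀ n, ∀ᵐ ω ∂μ, ‖X n ω‖ = ‖p₂ n‖)
    (hsum₂ : ∀ n, ∀ᵐ ω ∂μ, ∑ t, X n ω t = ∑ t, p₂ n t)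
    (q : ι₂ → EuclideanSpace ℝ (Fin T)) (hq : ∀ n, q n = ∫ ω, X n ω ∂μ)
    (hdesc₂ : ∀ n, ⟪(N : ℝ) • d, q n - p₂ n⟫
      ≤ -((N : ℝ) - 1) * ‖q n - p₂ n‖ ^ 2 + ⟪p₂ n, q n - p₂ n⟫)
    -- the updated random average profile
    (dplus : Ω → EuclideanSpace ℝ (Fin T))
    (hdplus : ∀ ω, dplus ω = (1 / (N : ℝ)) • (b + (∑ n, pplus n + ∑ n, X n ω))) :
    (T : ℝ) * (N : ℝ) ^ 2 * ((∫ ω, V (dplus ω) ∂μ) - V d)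
        ≤ -(N : ℝ) * ∑ n, ‖pplus n - p₁ n‖ ^ 2 - ((N : ℝ) - 1) * ∑ n, ‖q n - p₂ n‖ ^ 2
      ∧ -(N : ℝ) * ∑ n, ‖pplus n - p₁ n‖ ^ 2 - ((N : ℝ) - 1) * ∑ n, ‖q n - p₂ n‖ ^ 2 ≤ 0
      ∧ (∫ ω, V (dplus ω) ∂μ) ≤ V d :=
  one_step_expected_descent_general T hT N hNdef hN μ b p₁ p₂ d hd pplus hsum₁ hdesc₁ X hindep hint
    hnorm hsum₂ q hq hdesc₂ dplus hdplus
end
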